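/- arXiv:2007.04159 — 2 statements merged into one kernel-verified Lean document; each statement's English description precedes it below -/
import Mathlib

section
/- Let q be a prime power and p a prime with p ∤ q. If q is not a primitive root modulo p and p > 2q−2, then μ(F_q,p) ≤ p. -/
/-!
Let `P` be an irreducible factor of the `p`-th cyclotomic polynomial over `F_q`. Its degree `d` is
the order of `q` modulo `p`, so `2 ≤ d ≤ (p - 1) / 2` and hence `q + d ≤ p`. In the
`d`-dimensional space `F_q[X]/(P)`, a family of `N` vectors any `d` of which are independent has
`N ≤ q + d - 1`: quotienting by one of the vectors reduces to dimension `d - 1`, and in dimension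
two the vectors lie on distinct lines, of which there are `q + 1`. So some `≤ d` of the powers
`1, X, …, X^(p-1)` are dependent modulo `P`, which yields a multiple `c` of `P` of degree `< p`
and weight `≤ d`. The ideal generated by `c` in `F_q[X]/(X^p - 1)` lies in the kernel of the
surjection onto `F_q[X]/(P)`, so its dimension is at most `p - d`.
-/

open Polynomial

/-- The ring R(F,n) = F[X]/(X^n - 1). -/
abbrev CycRing (F : Type*) [Field F] (n : ℕ) := AdjoinRoot (X ^ n - Polynomial.C (1 : F))

/-- The unique representative of degree < n of an element of F[X]/(X^n-1). -/
noncomputable def cycRep {F : Type*} [Field F] {n : ℕ} (f : CycRing F n) : F[X] :=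
  if h : n = 0 then 0
  else AdjoinRoot.modByMonicHom (monic_X_pow_sub_C (1 : F) h) f

/-- Hamming weight of an element of F[X]/(X^n-1): the number of nonzero coefficients of
its representative of degree < n. -/
noncomputable def cycWt {F : Type*} [Field F] {n : ℕ} (f : CycRing F n) : ℕ :=
  (cycRep f).support.card

/-- Minimum distance of a cyclic code (ideal of F[X]/(X^n-1)). -/
noncomputable def cycDist {F : Type*} [Field F] {n : ℕ} (I : Ideal (CycRing F n)) : ℕ :=
  sInf {w | ∃ f ∈ I, f ≠ 0 ∧ cycWt f = w}

/-- Dimension of a cyclic code as an F-vector space. -/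
noncomputable def cycDim (F : Type*) [Field F] {n : ℕ} (I : Ideal (CycRing F n)) : ℕ :=
  Module.finrank F (Submodule.restrictScalars F I)

/-- The invariant μ(F,n). -/
noncomputable def mu (F : Type*) [Field F] (n : ℕ) : ℕ :=
  sInf {w | ∃ f : CycRing F n, f ≠ 0 ∧
    cycDist (Ideal.span {f}) + cycDim F (Ideal.span {f}) = w}

/-- Hamming weight of a vector: its number of nonzero coordinates. -/
noncomputable def wt {ι α : Type*} [Zero α] (v : ι → α) : ℕ := Set.ncard {i | v i ≠ 0}

/-- Minimum distance of a linear code of length N over F. -/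
noncomputable def codeDist {F : Type*} [Field F] {N : ℕ} (Cd : Submodule F (Fin N → F)) : ℕ :=
  sInf {w | ∃ x ∈ Cd, x ≠ 0 ∧ wt x = w}

section MDSBound

variable {F V ι : Type*} [Field F] [AddCommGroup V] [Module F V]

theorem LinearIndepOn.mkQ_span_singleton {v : ι → V} {t : Set ι} {i : ι}
    (h : LinearIndepOn F v (insert i t)) (hi : i ∉ t) :
    LinearIndepOn F ((Submodule.span F {v i}).mkQ ∘ v) t := by
  have hvi : v i ≠ 0 := h.ne_zero (Set.mem_insert i t)
  rw [linearIndepOn_insert hi] at h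
  refine h.1.map ?_
  rw [Submodule.ker_mkQ, ← Set.image_eq_range, Submodule.disjoint_span_singleton' hvi]
  exact h.2

variable [Fintype F]

theorem card_le_card_add_one_of_linearIndepOn_pair [FiniteDimensional F V]
    (hV : Module.finrank F V ≤ 2) (v : ι → V) (s : Finset ι)
    (hv : ∀ t ⊆ s, t.card ≤ 2 → LinearIndepOn F v t) :
    s.card ≤ Fintype.card F + 1 := by
  classical
  have : Finite V := Module.finite_of_finite F
  have : Fintype V := Fintype.ofFinite V
  have hv0 : ∀ i ∈ s, v i ≠ 0 := fun i hi =>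
    (hv {i} (by simpa) (by simp)).ne_zero (by simp)
  -- `(i, c) ↦ c • v i` is injective since the `v i` span pairwise distinct lines
  let units : Finset F := Finset.univ.erase 0
  have hmaps : Set.MapsTo (fun x : ι × F => x.2 • v x.1) ↑(s ×ˢ units)
      ↑(Finset.univ.erase (0 : V)) := by
    rintro ⟨i, c⟩ hic
    simp only [Finset.coe_product, Set.mem_prod, Finset.mem_coe, units, Finset.mem_erase] at hic
    simpa using smul_ne_zero hic.2.1 (hv0 i hic.1)
  have hinj : Set.InjOn (fun x : ι × F => x.2 • v x.1) ↑(s ×ˢ units) := by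
    rintro ⟨i, c⟩ hic ⟨j, c'⟩ hjc' (h : c • v i = c' • v j)
    simp only [Finset.coe_product, Set.mem_prod, Finset.mem_coe, units, Finset.mem_erase]
      at hic hjc'
    obtain rfl | hij := eq_or_ne i j
    · rw [smul_left_injective F (hv0 i hic.1) h]
    · have hpair := hv {i, j} (by simp [Finset.insert_subset_iff, hic.1, hjc'.1])
        Finset.card_le_two
      rw [Finset.coe_pair, linearIndepOn_pair_iff v hij (hv0 i hic.1)] at hpair
      exact absurd (by rw [mul_smul, h, inv_smul_smul₀ hjc'.2.1]) (hpair (c'⁻¹ * c))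
  have hcard := Finset.card_le_card_of_injOn _ hmaps hinj
  rw [Finset.card_product, Finset.card_erase_of_mem (Finset.mem_univ _),
    Finset.card_erase_of_mem (Finset.mem_univ _), Finset.card_univ, Finset.card_univ,
    Module.card_eq_pow_finrank (K := F) (V := V)] at hcard
  have hq : 1 < Fintype.card F := Fintype.one_lt_card
  have hV2 : Fintype.card F ^ Module.finrank F V ≤ Fintype.card F ^ 2 :=
    Nat.pow_le_pow_right hq.le hV
  refine Nat.le_of_mul_le_mul_right (c := Fintype.card F - 1) ?_ (by omega)
  calc s.card * (Fintype.card F - 1) ≤ Fintype.card F ^ 2 - 1 := by omega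
    _ = (Fintype.card F + 1) * (Fintype.card F - 1) := by simpa using Nat.sq_sub_sq _ 1

theorem card_add_one_le_of_forall_linearIndepOn {k : ℕ} (hk : 2 ≤ k) [FiniteDimensional F V]
    (hV : Module.finrank F V ≤ k) (v : ι → V) (s : Finset ι)
    (hv : ∀ t ⊆ s, t.card ≤ k → LinearIndepOn F v t) :
    s.card + 1 ≤ Fintype.card F + k := by
  classical
  induction k, hk using Nat.le_induction generalizing V s with
  | base => have := card_le_card_add_one_of_linearIndepOn_pair hV v s hv; omega
  | succ k hk ih =>
    obtain rfl | ⟨i, hi⟩ := s.eq_empty_or_nonempty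
    · rw [Finset.card_empty]; omega
    have hvi : v i ≠ 0 := (hv {i} (by simpa) (by simp)).ne_zero (by simp)
    have hW : Module.finrank F (V ⧸ Submodule.span F {v i}) ≤ k := by
      have := (Submodule.span F {v i}).finrank_quotient_add_finrank
      rw [finrank_span_singleton hvi] at this
      omega
    have := ih hW (_ ∘ v) (s.erase i) fun t hts htk => by
      have hit : i ∉ t := fun h => by simpa using hts h
      have hins := hv (insert i t) (Finset.insert_subset hi (hts.trans (s.erase_subset i)))
        ((Finset.card_insert_le i t).trans (by omega))
      rw [Finset.coe_insert] at hins
      exact hins.mkQ_span_singleton (by simpa using hit)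
    rw [Finset.card_erase_of_mem hi] at this
    have := s.card_pos.mpr ⟨i, hi⟩
    omega

end MDSBound

theorem exists_dvd_degree_lt_card_support_le {F : Type*} [Field F] [Fintype F] {n : ℕ}
    {P : F[X]} (hd : 2 ≤ P.natDegree) (hn : Fintype.card F + P.natDegree ≤ n) :
    ∃ c : F[X], c ≠ 0 ∧ c.degree < n ∧ P ∣ c ∧ c.support.card ≤ P.natDegree := by
  classical
  have hP0 : P ≠ 0 := ne_zero_of_natDegree_gt hd
  let v : ℕ → AdjoinRoot P := fun i => AdjoinRoot.root P ^ i
  have : FiniteDimensional F (AdjoinRoot P) := (AdjoinRoot.powerBasis hP0).finite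
  obtain ⟨t, hts, htd, hdep⟩ :
      ∃ t ⊆ Finset.range n, t.card ≤ P.natDegree ∧ ¬ LinearIndepOn F v t := by
    by_contra! h
    have hV : Module.finrank F (AdjoinRoot P) ≤ P.natDegree :=
      finrank_quotient_span_eq_natDegree.le
    have := card_add_one_le_of_forall_linearIndepOn hd hV v (Finset.range n) h
    rw [Finset.card_range] at this
    omega
  obtain ⟨g, hg, i, hi, hgi⟩ := not_linearIndepOn_finset_iff.mp hdep
  set c := ∑ j ∈ t, C (g j) * X ^ j
  have hcoeff : ∀ m, c.coeff m = if m ∈ t then g m else 0 := by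
    intro m
    simp [c, finsetSum_coeff]
  refine ⟨c, fun h => hgi (by simpa [hi, h, eq_comm] using hcoeff i), ?_, ?_, ?_⟩
  · rw [degree_lt_iff_coeff_zero]
    intro m hm
    rw [hcoeff, if_neg fun h => by have := Finset.mem_range.mp (hts h); omega]
  · rw [← AdjoinRoot.mk_eq_zero, ← AdjoinRoot.aeval_eq, ← hg]
    simp [c, map_sum, Algebra.smul_def, v]
  · refine (Finset.card_le_card fun m hm => ?_).trans htd
    by_contra h
    exact mem_support_iff.mp hm (by rw [hcoeff, if_neg h])

theorem AdjoinRoot.algHomOfDvd_mk {R : Type*} [CommRing R] {f g : R[X]} (hgf : g ∣ f)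
    (c : R[X]) : AdjoinRoot.algHomOfDvd R f g hgf (AdjoinRoot.mk f c) = AdjoinRoot.mk g c :=
  AdjoinRoot.aeval_eq c

section CyclicCode

variable {F : Type*} [Field F] {n : ℕ}

theorem cycWt_mk_of_degree_lt (hn : n ≠ 0) {c : F[X]} (hc : c.degree < n) :
    cycWt (AdjoinRoot.mk (X ^ n - C 1) c) = c.support.card := by
  rw [cycWt, cycRep, dif_neg hn, AdjoinRoot.modByMonicHom_mk,
    (modByMonic_eq_self_iff (monic_X_pow_sub_C 1 hn)).mpr
      (by rwa [degree_X_pow_sub_C (Nat.pos_of_ne_zero hn)])]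

theorem cycDim_span_add_natDegree_le (hn : n ≠ 0) {P : F[X]}
    (hP : P ∣ X ^ n - C 1) {f : CycRing F n}
    (hf : AdjoinRoot.algHomOfDvd F (X ^ n - C 1) P hP f = 0) :
    cycDim F (Ideal.span {f}) + P.natDegree ≤ n := by
  let ψ := (AdjoinRoot.algHomOfDvd F (X ^ n - C 1) P hP).toLinearMap
  have : Module.Finite F (CycRing F n) := (monic_X_pow_sub_C 1 hn).finite_adjoinRoot
  have hψ : Function.Surjective ψ := by
    intro y
    obtain ⟨g, rfl⟩ := AdjoinRoot.mk_surjective y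
    exact ⟨AdjoinRoot.mk _ g, AdjoinRoot.algHomOfDvd_mk hP g⟩
  have hker : (Ideal.span {f}).restrictScalars F ≤ LinearMap.ker ψ := by
    intro x hx
    obtain ⟨a, rfl⟩ := Ideal.mem_span_singleton'.mp hx
    simp [ψ, hf]
  have hrank := LinearMap.finrank_range_add_finrank_ker ψ
  rw [LinearMap.range_eq_top.mpr hψ, finrank_top] at hrank
  have h1 : Module.finrank F (AdjoinRoot P) = P.natDegree := finrank_quotient_span_eq_natDegree
  have h2 : Module.finrank F (AdjoinRoot (X ^ n - C (1 : F))) = n :=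
    finrank_quotient_span_eq_natDegree.trans natDegree_X_pow_sub_C
  have := Submodule.finrank_mono hker
  rw [cycDim]
  calc _ ≤ Module.finrank F (LinearMap.ker ψ) + P.natDegree := Nat.add_le_add_right this _
    _ = n := by rw [← h1, add_comm, hrank, h2]

theorem mu_add_natDegree_le (hn : n ≠ 0) {P : F[X]} (hP : P ∣ X ^ n - C 1) {c : F[X]}
    (hc0 : c ≠ 0) (hcn : c.degree < n) (hPc : P ∣ c) :
    mu F n + P.natDegree ≤ c.support.card + n := by
  set f := AdjoinRoot.mk (X ^ n - C 1) c
  have hf0 : f ≠ 0 := fun h => hc0 <| eq_zero_of_dvd_of_degree_lt (AdjoinRoot.mk_eq_zero.mp h)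
    (by rwa [degree_X_pow_sub_C (Nat.pos_of_ne_zero hn)])
  have hdist : cycDist (Ideal.span {f}) ≤ c.support.card := by
    rw [← cycWt_mk_of_degree_lt hn hcn]
    exact Nat.sInf_le ⟨f, Ideal.mem_span_singleton_self f, hf0, rfl⟩
  have hdim := cycDim_span_add_natDegree_le hn hP (f := f)
    ((AdjoinRoot.algHomOfDvd_mk hP c).trans (AdjoinRoot.mk_eq_zero.mpr hPc))
  have hmu : mu F n ≤ cycDist (Ideal.span {f}) + cycDim F (Ideal.span {f}) :=
    Nat.sInf_le ⟨f, hf0, rfl⟩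
  omega

end CyclicCode

theorem natDegree_eq_orderOf_of_dvd_cyclotomic {F : Type*} [Field F] [Fintype F] {n : ℕ}
    (hn : (Fintype.card F).Coprime n) {P : F[X]} (hP : P ∣ cyclotomic n F)
    (hirr : Irreducible P) : P.natDegree = orderOf (Fintype.card F : ZMod n) := by
  obtain ⟨m, hr, hcard⟩ := FiniteField.card F (ringChar F)
  have : Fact (ringChar F).Prime := ⟨hr⟩
  have hrn : (ringChar F).Coprime n :=
    Nat.Coprime.coprime_dvd_left (hcard ▸ dvd_pow_self _ m.ne_zero) hn
  rw [natDegree_of_dvd_cyclotomic_of_irreducible hcard hrn hP hirr, ← orderOf_units,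
    ZMod.coe_unitOfCoprime, hcard]

theorem ZMod.one_lt_orderOf_natCast {p q : ℕ} [Fact p.Prime] (hq : 1 < q) (hqp : q < p) :
    1 < orderOf (q : ZMod p) := by
  have hq0 : (q : ZMod p) ≠ 0 := by
    rw [Ne, ZMod.natCast_eq_zero_iff]
    exact Nat.not_dvd_of_pos_of_lt (by omega) hqp
  have hpos := Nat.pos_of_dvd_of_pos (ZMod.orderOf_dvd_card_sub_one hq0)
    (by have := (Fact.out : p.Prime).two_le; omega)
  refine lt_of_le_of_ne hpos fun h => ?_
  rw [eq_comm, orderOf_eq_one_iff, ← Nat.cast_one, ZMod.natCast_eq_natCast_iff',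
    Nat.mod_eq_of_lt hqp, Nat.mod_eq_of_lt (by omega)] at h
  omega

theorem ZMod.two_mul_orderOf_le {p : ℕ} [Fact p.Prime] {a : ZMod p} (ha : a ≠ 0)
    (hprim : orderOf a ≠ p - 1) : 2 * orderOf a ≤ p - 1 := by
  have := (Fact.out : p.Prime).two_le
  obtain ⟨k, hk⟩ := ZMod.orderOf_dvd_card_sub_one ha
  rcases k with _ | _ | k
  · omega
  · omega
  · nlinarith

/-- Unconditionally, if q is not a primitive root modulo p and p > 2q−2,
then μ(F_q,p) ≤ p. -/
theorem mu_le_unconditional (q p : ℕ) (F : Type*) [Field F] [Fintype F]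
    (hq : Fintype.card F = q) (hp : p.Prime) (hpq : ¬ p ∣ q)
    (hnotprim : orderOf ((q : ZMod p)) ≠ p - 1)
    (hbig : 2 * q - 2 < p) :
    mu F p ≤ p := by
  subst hq
  have : Fact p.Prime := ⟨hp⟩
  have hq1 : 1 < Fintype.card F := Fintype.one_lt_card
  obtain ⟨P, hirr, hPcyc⟩ := exists_irreducible_of_degree_pos (degree_cyclotomic_pos p F hp.pos)
  have hd : P.natDegree = orderOf (Fintype.card F : ZMod p) :=
    natDegree_eq_orderOf_of_dvd_cyclotomic (hp.coprime_iff_not_dvd.mpr hpq).symm hPcyc hirr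
  have hd2 : 2 ≤ P.natDegree := hd ▸ ZMod.one_lt_orderOf_natCast hq1 (by omega)
  have hdp : 2 * P.natDegree ≤ p - 1 :=
    hd ▸ ZMod.two_mul_orderOf_le (by rwa [Ne, ZMod.natCast_eq_zero_iff]) hnotprim
  obtain ⟨c, hc0, hcp, hPc, hcd⟩ :=
    exists_dvd_degree_lt_card_support_le (n := p) hd2 (by omega)
  have hPX : P ∣ X ^ p - C 1 := by simpa using hPcyc.trans (cyclotomic.dvd_X_pow_sub_one p F)
  have := mu_add_natDegree_le hp.ne_zero hPX hc0 hcp hPc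
  omega
end

section
/- Let q be a prime power and p a prime with p ∤ q. Then μ(F_q,p) ≥ min{ δ + s − 1 + p − r_{δ,s}(p) : δ ∈ {2,…,p}, s ∈ {0,…,p−δ} }, where r_{δ,s}(p) is the largest size of a subset of Z/pZ not containing any set of the form A(δ,s) = {a + kb + rc : k ∈ {0,…,δ−2}, r ∈ {0,…,s}} with b, c coprime to p. -/
open Polynomial

/-- `S` contains a set of shape A(δ,s) in ℤ/pℤ:
a set {a + k·b + r·c : k ∈ {0,…,δ−2}, r ∈ {0,…,s}} with b, c coprime to p (units). -/
def ContainsShape {p : ℕ} (S : Set (ZMod p)) (δ s : ℕ) : Prop :=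
  ∃ a b c : ZMod p, IsUnit b ∧ IsUnit c ∧
    ∀ k : ℕ, k ≤ δ - 2 → ∀ r : ℕ, r ≤ s → a + (k : ZMod p) * b + (r : ZMod p) * c ∈ S

/-- r_{δ,s}(p): the largest size of a subset of ℤ/pℤ not containing a set of
shape A(δ,s). -/
noncomputable def rShape (δ s p : ℕ) : ℕ :=
  sSup {c | ∃ S : Set (ZMod p), ¬ ContainsShape S δ s ∧ S.ncard = c}

/-!
Let `g = gcd(f, X^p - 1)`, the generator polynomial of the code `C = (f)`. Then
`dim C ≥ p - deg g`, and `g` vanishes at exactly `deg g` of the powers `α^i` (`i ∈ ℤ/p`) of a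
primitive `p`-th root of unity; call this set of exponents `Z`. Every codeword vanishes on `Z`.
If `d < p`, a minimum-weight codeword cannot vanish on `d` consecutive terms of a progression
(BCH bound, via a Vandermonde determinant), so `Z` contains no set of shape `A(2, d-1)` and
`deg g ≤ r_{2,d-1}(p)`; this bounds the term for `(δ, s) = (2, d - 1)` by `d + dim C`.
Otherwise `d = p`; then `dim C ≥ 1`, and `r_{p,0}(p) ≥ p - 2`, witnessed by `{0, …, p - 3}`,
which bounds the term for `(δ, s) = (p, 0)`.
-/

theorem ZMod.natCast_injOn_Iio (n : ℕ) : Set.InjOn (Nat.cast : ℕ → ZMod n) (Set.Iio n) :=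
  fun i hi j hj h => by rw [← ZMod.val_cast_of_lt hi, h, ZMod.val_cast_of_lt hj]

theorem IsPrimitiveRoot.pow_eq_pow_iff_natCast_eq {M : Type*} [CommMonoid M] {ζ : M} {k : ℕ}
    [NeZero k] (h : IsPrimitiveRoot ζ k) {m m' : ℕ} : ζ ^ m = ζ ^ m' ↔ (m : ZMod k) = m' := by
  rw [(h.isOfFinOrder (NeZero.ne k)).pow_eq_pow_iff_modEq, ← h.eq_orderOf,
    ZMod.natCast_eq_natCast_iff]

theorem IsPrimitiveRoot.pow_val_eq_pow_iff {M : Type*} [CommMonoid M] {ζ : M} {k : ℕ}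
    [NeZero k] (h : IsPrimitiveRoot ζ k) {x : ZMod k} {m : ℕ} : ζ ^ x.val = ζ ^ m ↔ x = m := by
  rw [h.pow_eq_pow_iff_natCast_eq, ZMod.natCast_zmod_val]

theorem Finset.eq_zero_of_forall_sum_mul_pow_eq_zero {R ι : Type*} [CommRing R] [IsDomain R]
    {s : Finset ι} {f v : ι → R} (hf : Set.InjOn f s)
    (hfv : ∀ i < s.card, ∑ j ∈ s, v j * f j ^ i = 0) : ∀ j ∈ s, v j = 0 := by
  let e := s.equivFin.symm
  have hzero : (fun k => v (e k)) = 0 := by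
    refine Matrix.eq_zero_of_forall_pow_sum_mul_pow_eq_zero (f := fun k => f (e k))
      (fun k l hkl => e.injective (Subtype.ext (hf (e k).2 (e l).2 hkl))) fun i => ?_
    rw [← hfv i i.2, ← Finset.sum_coe_sort s, ← e.sum_comp]
  intro j hj
  simpa [e] using congrFun hzero (e.symm ⟨j, hj⟩)

section RootsOfUnity

variable {F K : Type*} [Field F] [Field K] [Algebra F K] {n : ℕ} [NeZero n] {α : K}

-- The values `c(α^(a + j b))` form a Vandermonde system in the terms `c_m α^(a m)`.
theorem IsPrimitiveRoot.eq_zero_of_aeval_pow_progression_eq_zero (hα : IsPrimitiveRoot α n)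
    {c : F[X]} (hdeg : c.natDegree < n) (a b : ZMod n) (hb : IsUnit b)
    (hc : ∀ j < c.support.card, aeval (α ^ (a + j * b).val) c = 0) : c = 0 := by
  have hlt : ∀ m ∈ c.support, m < n := fun m hm => (le_natDegree_of_mem_supp m hm).trans_lt hdeg
  have hinj : Set.InjOn (fun m => α ^ (b.val * m)) c.support := by
    intro m hm m' hm' h
    rw [hα.pow_eq_pow_iff_natCast_eq] at h
    push_cast [ZMod.natCast_val, ZMod.cast_id] at h
    exact ZMod.natCast_injOn_Iio n (hlt m hm) (hlt m' hm') (hb.mul_left_cancel h)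
  have hcoeff := Finset.eq_zero_of_forall_sum_mul_pow_eq_zero
    (v := fun m => algebraMap F K (c.coeff m) * α ^ (a.val * m)) hinj fun j hj => by
      have hpow : α ^ (a + j * b).val = α ^ (a.val + j * b.val) := by
        rw [hα.pow_val_eq_pow_iff]
        push_cast [ZMod.natCast_val, ZMod.cast_id]
        rfl
      rw [← hc j hj, hpow, aeval_def, eval₂_eq_sum, Polynomial.sum_def]
      refine Finset.sum_congr rfl fun m _ => ?_
      rw [mul_assoc, ← pow_mul, ← pow_mul, ← pow_add]
      ring_nf
  refine support_eq_empty.1 (Finset.eq_empty_of_forall_notMem fun m hm => ?_)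
  have := hcoeff m hm
  simp only [mul_eq_zero, map_eq_zero, pow_eq_zero_iff', hα.ne_zero (NeZero.ne n), false_and,
    or_false] at this
  exact mem_support_iff.1 hm this

theorem IsPrimitiveRoot.ncard_setOf_aeval_pow_val_eq_zero (hα : IsPrimitiveRoot α n) {g : F[X]}
    (hg : g ∣ X ^ n - C 1) : {i : ZMod n | aeval (α ^ i.val) g = 0}.ncard = g.natDegree := by
  rw [C_1] at hg
  have hnF : (n : F) ≠ 0 := fun h =>
    hα.neZero'.out (by rw [← map_natCast (algebraMap F K), h, map_zero])
  have hg0 : g ≠ 0 := ne_zero_of_dvd_ne_zero (X_pow_sub_C_ne_zero (NeZero.pos n) 1) hg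
  have hsep : g.Separable := (X_pow_sub_one_separable_iff.2 hnF).of_dvd hg
  have hsplit : (g.map (algebraMap F K)).Splits :=
    (X_pow_sub_one_splits hα).of_dvd (X_pow_sub_C_ne_zero (NeZero.pos n) 1)
      (by simpa using Polynomial.map_dvd (algebraMap F K) hg)
  have hinj : Function.Injective fun i : ZMod n => α ^ i.val :=
    fun i j h => ZMod.val_injective n (hα.pow_inj i.val_lt j.val_lt h)
  have hroots : g.rootSet K ⊆ Set.range fun i : ZMod n => α ^ i.val := by
    intro y hy
    rw [mem_rootSet_of_ne hg0] at hy
    obtain ⟨t, ht⟩ := hg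
    have hyn : y ^ n = 1 := by
      simpa [sub_eq_zero, hy] using congrArg (aeval y) ht
    obtain ⟨i, hi, rfl⟩ := hα.eq_pow_of_pow_eq_one hyn
    exact ⟨i, by simp only [ZMod.val_cast_of_lt hi]⟩
  have hpre :
      {i : ZMod n | aeval (α ^ i.val) g = 0} = (fun i => α ^ i.val) ⁻¹' g.rootSet K := by
    ext i
    simp [mem_rootSet_of_ne hg0]
  rw [hpre, Set.ncard_preimage_of_injective_subset_range hinj hroots, ← Nat.card_coe_set_eq,
    Nat.card_eq_fintype_card, card_rootSet_eq_natDegree hsep hsplit]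

end RootsOfUnity

section CycRing

variable {F : Type*} [Field F] {n : ℕ}

theorem mk_cycRep (hn : n ≠ 0) (z : CycRing F n) : AdjoinRoot.mk _ (cycRep z) = z := by
  rw [cycRep, dif_neg hn]
  exact AdjoinRoot.mk_leftInverse (monic_X_pow_sub_C 1 hn) z

theorem cycRep_ne_zero (hn : n ≠ 0) {z : CycRing F n} (hz : z ≠ 0) : cycRep z ≠ 0 := fun h =>
  hz (by rw [← mk_cycRep hn z, h, map_zero])

theorem natDegree_cycRep_lt (hn : n ≠ 0) (z : CycRing F n) : (cycRep z).natDegree < n := by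
  obtain ⟨z, rfl⟩ := AdjoinRoot.mk_surjective z
  rw [cycRep, dif_neg hn, AdjoinRoot.modByMonicHom_mk]
  have hne : X ^ n - C (1 : F) ≠ 1 := fun h => hn <| by
    rw [← natDegree_X_pow_sub_C (n := n) (r := (1 : F)), h, natDegree_one]
  have h := natDegree_modByMonic_lt z (monic_X_pow_sub_C 1 hn) hne
  rwa [natDegree_X_pow_sub_C] at h

theorem cycWt_pos (hn : n ≠ 0) {z : CycRing F n} (hz : z ≠ 0) : 0 < cycWt z :=
  Finset.card_pos.2 (nonempty_support_iff.2 (cycRep_ne_zero hn hz))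

theorem exists_cycWt_eq_cycDist {I : Ideal (CycRing F n)} {z : CycRing F n} (hz : z ∈ I)
    (hz0 : z ≠ 0) : ∃ c ∈ I, c ≠ 0 ∧ cycWt c = cycDist I :=
  Nat.sInf_mem (s := {w | ∃ c ∈ I, c ≠ 0 ∧ cycWt c = w}) ⟨_, z, hz, hz0, rfl⟩

theorem exists_cycDist_add_cycDim_eq_mu (hn : n ≠ 0) :
    ∃ f : CycRing F n, f ≠ 0 ∧
      cycDist (Ideal.span {f}) + cycDim F (Ideal.span {f}) = mu F n := by
  have : Nontrivial (CycRing F n) := AdjoinRoot.nontrivial _ <| by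
    rw [degree_X_pow_sub_C (Nat.pos_of_ne_zero hn)]
    exact_mod_cast hn
  exact Nat.sInf_mem (s := {w | ∃ f : CycRing F n, f ≠ 0 ∧
    cycDist (Ideal.span {f}) + cycDim F (Ideal.span {f}) = w}) ⟨_, 1, one_ne_zero, rfl⟩

theorem sub_natDegree_le_cycDim (hn : n ≠ 0) {I : Ideal (CycRing F n)} {g : F[X]} (hg0 : g ≠ 0)
    (hg : AdjoinRoot.mk _ g ∈ I) : n - g.natDegree ≤ cycDim F I := by
  have : Module.Finite F (CycRing F n) :=
    (AdjoinRoot.powerBasis (X_pow_sub_C_ne_zero (Nat.pos_of_ne_zero hn) 1)).finite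
  let φ : degreeLT F (n - g.natDegree) →ₗ[F] CycRing F n :=
    (AdjoinRoot.mkₐ _).toLinearMap ∘ₗ LinearMap.mulRight F g ∘ₗ (degreeLT F _).subtype
  have hφ : Function.Injective φ := by
    refine (injective_iff_map_eq_zero φ).2 fun u hφu => Subtype.ext ?_
    by_contra hu0
    have hdvd : X ^ n - C 1 ∣ (u : F[X]) * g := AdjoinRoot.mk_eq_zero.1 hφu
    have hdeg := natDegree_le_of_dvd hdvd (mul_ne_zero hu0 hg0)
    have hu := (natDegree_lt_iff_degree_lt hu0).2 (mem_degreeLT.1 u.2)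
    rw [natDegree_X_pow_sub_C, natDegree_mul hu0 hg0] at hdeg
    omega
  have hrange : LinearMap.range φ ≤ I.restrictScalars F := by
    rintro _ ⟨u, rfl⟩
    show AdjoinRoot.mk _ ((u : F[X]) * g) ∈ I
    rw [map_mul]
    exact I.mul_mem_left _ hg
  calc n - g.natDegree = Module.finrank F (degreeLT F (n - g.natDegree)) := by
        rw [(degreeLTEquiv F _).finrank_eq, Module.finrank_fin_fun]
    _ = Module.finrank F (LinearMap.range φ) := (LinearMap.finrank_range_of_inj hφ).symm
    _ ≤ cycDim F I := Submodule.finrank_mono hrange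

open Classical in
noncomputable def genPoly (f : CycRing F n) : F[X] :=
  EuclideanDomain.gcd (cycRep f) (X ^ n - C 1)

theorem mk_genPoly_mem_span (hn : n ≠ 0) (f : CycRing F n) :
    AdjoinRoot.mk _ (genPoly f) ∈ Ideal.span {f} := by
  classical
  rw [Ideal.mem_span_singleton]
  refine ⟨AdjoinRoot.mk _ (EuclideanDomain.gcdA (cycRep f) (X ^ n - C 1)), ?_⟩
  rw [genPoly, EuclideanDomain.gcd_eq_gcd_ab, map_add, map_mul, map_mul, AdjoinRoot.mk_self,
    zero_mul, add_zero, mk_cycRep hn]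

theorem genPoly_dvd_cycRep_of_mem_span (hn : n ≠ 0) {f z : CycRing F n}
    (hz : z ∈ Ideal.span {f}) : genPoly f ∣ cycRep z := by
  classical
  obtain ⟨r, rfl⟩ := Ideal.mem_span_singleton'.1 hz
  obtain ⟨r, rfl⟩ := AdjoinRoot.mk_surjective r
  have hmod : X ^ n - C 1 ∣ cycRep (AdjoinRoot.mk _ r * f) - r * cycRep f := by
    rw [← AdjoinRoot.mk_eq_zero, map_sub, map_mul, mk_cycRep hn, mk_cycRep hn, sub_self]
  have := dvd_add ((EuclideanDomain.gcd_dvd_right _ _).trans hmod)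
    (dvd_mul_of_dvd_right (EuclideanDomain.gcd_dvd_left (cycRep f) _) r)
  rwa [sub_add_cancel] at this

theorem genPoly_dvd (f : CycRing F n) : genPoly f ∣ X ^ n - C 1 := by
  classical
  exact EuclideanDomain.gcd_dvd_right _ _

theorem genPoly_ne_zero (hn : n ≠ 0) (f : CycRing F n) : genPoly f ≠ 0 :=
  ne_zero_of_dvd_ne_zero (X_pow_sub_C_ne_zero (Nat.pos_of_ne_zero hn) 1) (genPoly_dvd f)

theorem natDegree_genPoly_lt (hn : n ≠ 0) {f : CycRing F n} (hf : f ≠ 0) :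
    (genPoly f).natDegree < n := by
  classical
  exact (natDegree_le_of_dvd (EuclideanDomain.gcd_dvd_left _ _) (cycRep_ne_zero hn hf)).trans_lt
    (natDegree_cycRep_lt hn f)

end CycRing

theorem IsPrimitiveRoot.not_containsShape_two {F K : Type*} [Field F] [Field K] [Algebra F K]
    {n : ℕ} [NeZero n] {α : K} (hα : IsPrimitiveRoot α n) {c : F[X]} (hc0 : c ≠ 0)
    (hdeg : c.natDegree < n) {Z : Set (ZMod n)} (hZ : ∀ i ∈ Z, aeval (α ^ i.val) c = 0) :
    ¬ContainsShape Z 2 (c.support.card - 1) := by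
  rintro ⟨a, _, b, _, hb, hmem⟩
  refine hc0 (hα.eq_zero_of_aeval_pow_progression_eq_zero hdeg a b hb fun j hj => hZ _ ?_)
  simpa using hmem 0 le_rfl j (by omega)

section Shapes

variable {n : ℕ}

theorem ncard_le_rShape [NeZero n] {δ s : ℕ} {S : Set (ZMod n)} (hS : ¬ContainsShape S δ s) :
    S.ncard ≤ rShape δ s n := by
  refine le_csSup ⟨n, ?_⟩ ⟨S, hS, rfl⟩
  rintro _ ⟨T, -, rfl⟩
  simpa using Set.ncard_le_ncard (Set.subset_univ T)

theorem sub_two_le_rShape_self_zero (hn : 2 ≤ n) : n - 2 ≤ rShape n 0 n := by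
  have : NeZero n := ⟨by omega⟩
  let S : Finset (ZMod n) := (Finset.range (n - 2)).image Nat.cast
  have hS : S.card = n - 2 := by
    rw [Finset.card_image_of_injOn, Finset.card_range]
    exact (ZMod.natCast_injOn_Iio n).mono fun k hk =>
      Set.mem_Iio.2 ((Finset.mem_coe.1 hk |> Finset.mem_range.1).trans_le (Nat.sub_le n 2))
  refine hS ▸ Set.ncard_coe_finset S ▸ ncard_le_rShape ?_
  rintro ⟨a, b, _, hb, _, hmem⟩
  let P : Finset (ZMod n) := (Finset.range (n - 1)).image fun k : ℕ => a + k * b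
  have hP : P.card = n - 1 := by
    rw [Finset.card_image_of_injOn, Finset.card_range]
    intro i hi j hj h
    simp only [Finset.coe_range, Set.mem_Iio] at hi hj
    exact ZMod.natCast_injOn_Iio n (Set.mem_Iio.2 (by omega)) (Set.mem_Iio.2 (by omega))
      (hb.mul_right_cancel (add_left_cancel h))
  have hPS : P ⊆ S := by
    rw [Finset.image_subset_iff]
    intro k hk
    simpa using hmem k (by rw [Finset.mem_range] at hk; omega) 0 le_rfl
  have := Finset.card_le_card hPS
  omega

end Shapes

noncomputable def hartmannTzengBound (n : ℕ) : ℕ :=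
  sInf {v | ∃ δ s : ℕ, 2 ≤ δ ∧ δ ≤ n ∧ s ≤ n - δ ∧ v = δ + s - 1 + (n - rShape δ s n)}

theorem hartmannTzengBound_le_cycDist_add_cycDim {F : Type*} [Field F] {n : ℕ} (hn : 2 ≤ n)
    (hnF : (n : F) ≠ 0) {f : CycRing F n} (hf : f ≠ 0) :
    hartmannTzengBound n ≤ cycDist (Ideal.span {f}) + cycDim F (Ideal.span {f}) := by
  have hn0 : n ≠ 0 := by omega
  have : NeZero n := ⟨hn0⟩
  have : NeZero (n : F) := ⟨hnF⟩
  obtain ⟨α, hα⟩ := (CyclotomicField.isCyclotomicExtension n F).exists_isPrimitiveRoot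
    (Set.mem_singleton n) hn0
  set g := genPoly f
  set Z := {i : ZMod n | aeval (α ^ i.val) g = 0}
  have hZ : Z.ncard = g.natDegree := hα.ncard_setOf_aeval_pow_val_eq_zero (genPoly_dvd f)
  have hdim : n - g.natDegree ≤ cycDim F (Ideal.span {f}) :=
    sub_natDegree_le_cycDim hn0 (genPoly_ne_zero hn0 f) (mk_genPoly_mem_span hn0 f)
  obtain ⟨c, hcI, hc0, hcd⟩ := exists_cycWt_eq_cycDist (Ideal.mem_span_singleton_self f) hf
  rcases lt_or_ge (cycDist (Ideal.span {f})) n with hd | hd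
  · have hvan : ∀ i ∈ Z, aeval (α ^ i.val) (cycRep c) = 0 := fun i hi => by
      obtain ⟨t, ht⟩ := genPoly_dvd_cycRep_of_mem_span hn0 hcI
      rw [ht, map_mul, show aeval (α ^ i.val) g = 0 from hi, zero_mul]
    have hr : g.natDegree ≤ rShape 2 (cycWt c - 1) n :=
      hZ ▸ ncard_le_rShape (hα.not_containsShape_two (cycRep_ne_zero hn0 hc0)
        (natDegree_cycRep_lt hn0 c) hvan)
    have hc := cycWt_pos hn0 hc0
    calc hartmannTzengBound n ≤ 2 + (cycWt c - 1) - 1 + (n - rShape 2 (cycWt c - 1) n) :=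
          Nat.sInf_le ⟨2, _, le_rfl, hn, by omega, rfl⟩
      _ ≤ _ := by omega
  · have hr := sub_two_le_rShape_self_zero hn
    have hg : g.natDegree < n := natDegree_genPoly_lt hn0 hf
    calc hartmannTzengBound n ≤ n + 0 - 1 + (n - rShape n 0 n) :=
          Nat.sInf_le ⟨n, 0, hn, le_rfl, by omega, rfl⟩
      _ ≤ _ := by omega

theorem FiniteField.natCast_ne_zero_of_not_dvd_card {F : Type*} [Field F] [Fintype F] {p : ℕ}
    (hp : p.Prime) (h : ¬p ∣ Fintype.card F) : (p : F) ≠ 0 := by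
  intro hp0
  obtain ⟨k, hchar, hcard⟩ := FiniteField.card F (ringChar F)
  rw [(Nat.prime_dvd_prime_iff_eq hchar hp).1 (ringChar.dvd hp0)] at hcard
  exact h (hcard ▸ dvd_pow_self p k.ne_zero)

/-- μ(F_q,p) ≥ min{ δ + s − 1 + p − r_{δ,s}(p) : δ ∈ {2,…,p}, s ∈ {0,…,p−δ} }. -/
theorem mu_ge_hartmann_tzeng (q p : ℕ) (F : Type*) [Field F] [Fintype F]
    (hq : Fintype.card F = q) (hp : p.Prime) (hpq : ¬ p ∣ q) :
    sInf {v | ∃ δ s : ℕ, 2 ≤ δ ∧ δ ≤ p ∧ s ≤ p - δ ∧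
      v = δ + s - 1 + (p - rShape δ s p)} ≤ mu F p := by
  obtain ⟨f, hf, hfμ⟩ := exists_cycDist_add_cycDim_eq_mu (F := F) hp.ne_zero
  rw [← hfμ]
  exact hartmannTzengBound_le_cycDist_add_cycDim hp.two_le
    (FiniteField.natCast_ne_zero_of_not_dvd_card hp (hq ▸ hpq)) hf
end
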